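/- If O is a non-reversible topology on X, then every maximal chain in ([O]_∼, ⊆) is a Dedekind-complete linear order: for every cut (L₀, L₁) of the chain L with both parts nonempty, either L₀ has a largest element or L₁ has a smallest element. -/

import Mathlib

open Set Filter TopologicalSpace

variable {X : Type*}

/-- The family of open sets of a topology. -/
def opensOf (O : TopologicalSpace X) : Set (Set X) := {U | O.IsOpen U}

/-- The image family f[O] = { f[U] : U ∈ O } of a topology under a bijection. -/
def imgOpens (f : X ≃ X) (O : TopologicalSpace X) : Set (Set X) :=
  (Set.image f) '' opensOf O

/-- A topology is reversible iff every continuous self-bijection is a homeomorphism. -/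
def Reversible (O : TopologicalSpace X) : Prop :=
  ∀ f : X ≃ X, @Continuous X X O O f → @Continuous X X O O f.symm

/-- The homeomorphism class [O]_≅ of a topology within the topologies on X. -/
def homeoCls (O : TopologicalSpace X) : Set (TopologicalSpace X) :=
  {O' | ∃ f : X ≃ X, imgOpens f O = opensOf O'}

/-- O₁ ≼ O₂ : there is a condensation (continuous bijection) (X,O₂) → (X,O₁). -/
def Cond (O₁ O₂ : TopologicalSpace X) : Prop :=
  ∃ f : X ≃ X, @Continuous X X O₂ O₁ f

/-- The condensational equivalence class [O]_∼. -/
def simCls (O : TopologicalSpace X) : Set (TopologicalSpace X) :=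
  {O' | Cond O' O ∧ Cond O O'}

def IsMaxChainIn {α : Type*} (r : α → α → Prop) (S L : Set α) : Prop :=
  L ⊆ S ∧ IsChain r L ∧ ∀ L', L ⊆ L' → L' ⊆ S → IsChain r L' → L' = L

theorem IsMaxChainIn.mem_of_forall_comparable {α : Type*} {r : α → α → Prop} {S L : Set α}
    {a : α} (hL : IsMaxChainIn r S L) (ha : a ∈ S) (hcomp : ∀ b ∈ L, r a b ∨ r b a) :
    a ∈ L := by
  have hext : insert a L = L :=
    hL.2.2 _ (subset_insert a L) (insert_subset ha hL.1) (hL.2.1.insert fun b hb _ => hcomp b hb)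
  exact hext ▸ mem_insert a L

/-- The infimum of the upper part of the cut is comparable with every element of the chain and
lies in `S` by order-connectedness, so maximality puts it into the chain. -/
theorem IsMaxChainIn.exists_isGreatest_or_isLeast {α : Type*} [CompleteLattice α]
    {S L L₀ L₁ : Set α} (hS : S.OrdConnected) (hL : IsMaxChainIn (· ≤ ·) S L)
    (hunion : L₀ ∪ L₁ = L) (hne₀ : L₀.Nonempty) (hne₁ : L₁.Nonempty)
    (hcut : ∀ a ∈ L₀, ∀ b ∈ L₁, a ≤ b) :
    (∃ m, IsGreatest L₀ m) ∨ (∃ m, IsLeast L₁ m) := by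
  obtain ⟨a, ha⟩ := hne₀
  obtain ⟨b, hb⟩ := hne₁
  have hlow : ∀ x ∈ L₀, x ≤ sInf L₁ := fun x hx => le_sInf (hcut x hx)
  have hup : ∀ x ∈ L₁, sInf L₁ ≤ x := fun x hx => sInf_le hx
  have hmem : sInf L₁ ∈ L₀ ∪ L₁ := by
    rw [hunion]
    refine hL.mem_of_forall_comparable ?_ ?_
    · exact hS.out (hL.1 (hunion ▸ Or.inl ha)) (hL.1 (hunion ▸ Or.inr hb)) ⟨hlow a ha, hup b hb⟩
    · intro x hx
      rcases (hunion ▸ hx : x ∈ L₀ ∪ L₁) with hx | hx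
      · exact Or.inr (hlow x hx)
      · exact Or.inl (hup x hx)
  rcases hmem with h | h
  · exact Or.inl ⟨_, h, hlow⟩
  · exact Or.inr ⟨_, h, hup⟩

theorem opensOf_subset_opensOf_iff {O₁ O₂ : TopologicalSpace X} :
    opensOf O₁ ⊆ opensOf O₂ ↔ O₂ ≤ O₁ :=
  TopologicalSpace.le_def.symm

theorem simCls_ordConnected (O : TopologicalSpace X) : (simCls O).OrdConnected := by
  refine ⟨fun a ha b hb T hT => ⟨?_, ?_⟩⟩
  · obtain ⟨f, hf⟩ := ha.1
    exact ⟨f, continuous_le_rng hT.1 hf⟩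
  · obtain ⟨f, hf⟩ := hb.2
    exact ⟨f, continuous_le_dom hT.2 hf⟩

theorem stmt_7_general (O : TopologicalSpace X)
    (L : Set (TopologicalSpace X)) (hL : L ⊆ simCls O)
    (hchain : IsChain (fun O₁ O₂ => opensOf O₁ ⊆ opensOf O₂) L)
    (hmax : ∀ L' : Set (TopologicalSpace X), L ⊆ L' → L' ⊆ simCls O →
      IsChain (fun O₁ O₂ => opensOf O₁ ⊆ opensOf O₂) L' → L' = L)
    (L₀ L₁ : Set (TopologicalSpace X))
    (hunion : L₀ ∪ L₁ = L)
    (hne₀ : L₀.Nonempty) (hne₁ : L₁.Nonempty)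
    (hcut : ∀ a ∈ L₀, ∀ b ∈ L₁, opensOf a ⊆ opensOf b) :
    (∃ m ∈ L₀, ∀ x ∈ L₀, opensOf x ⊆ opensOf m) ∨
    (∃ m ∈ L₁, ∀ x ∈ L₁, opensOf m ⊆ opensOf x) := by
  -- Inclusion of open sets is the reverse of Mathlib's order on topologies.
  simp only [opensOf_subset_opensOf_iff] at hchain hmax hcut ⊢
  exact IsMaxChainIn.exists_isGreatest_or_isLeast (α := (TopologicalSpace X)ᵒᵈ)
    (simCls_ordConnected O).dual ⟨hL, hchain, hmax⟩ hunion hne₀ hne₁ hcut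

/-- if O is non-reversible, every maximal chain in ([O]_∼, ⊆)
is Dedekind complete: every nontrivial cut is realized. -/
theorem stmt_7 (O : TopologicalSpace X) (hO : ¬ Reversible O)
    (L : Set (TopologicalSpace X)) (hL : L ⊆ simCls O)
    (hchain : IsChain (fun O₁ O₂ => opensOf O₁ ⊆ opensOf O₂) L)
    (hmax : ∀ L' : Set (TopologicalSpace X), L ⊆ L' → L' ⊆ simCls O →
      IsChain (fun O₁ O₂ => opensOf O₁ ⊆ opensOf O₂) L' → L' = L)
    (L₀ L₁ : Set (TopologicalSpace X))
    (hunion : L₀ ∪ L₁ = L) (hdisj : Disjoint L₀ L₁)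
    (hne₀ : L₀.Nonempty) (hne₁ : L₁.Nonempty)
    (hcut : ∀ a ∈ L₀, ∀ b ∈ L₁, opensOf a ⊆ opensOf b) :
    (∃ m ∈ L₀, ∀ x ∈ L₀, opensOf x ⊆ opensOf m) ∨
    (∃ m ∈ L₁, ∀ x ∈ L₁, opensOf m ⊆ opensOf x) :=
  stmt_7_general O L hL hchain hmax L₀ L₁ hunion hne₀ hne₁ hcut
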